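/- Let L, T > 0 and α, β > 0 be fixed constants, set μ = √(β/6), let K(ξ,s) = (3/β)[sinh((L − ξ − s)/μ) + sign(ξ − s) sinh((L − |ξ − s|)/μ)]/sinh(L/μ) for ξ ≠ s, and let c : [0, L] → ℝ be continuous. Suppose (N, V) and (Ñ, Ṽ) are two pairs of continuous functions on [0, L] × [0, T'] (for some 0 < T' ≤ T) that both satisfy the integral system N(ξ, t) = N₀(ξ) + ∫₀ᵗ ∫₀ᴸ K(ξ, s)(1 + α c(s)² N(s, τ)) V(s, τ) ds dτ, V(ξ, t) = V₀(ξ) + ∫₀ᵗ ∫₀ᴸ K(ξ, s)[ c(s) N(s, τ) + (α/2) c(s)² V(s, τ)² ] ds dτ with the same continuous initial data N₀, V₀. Then (N, V) = (Ñ, Ṽ) on [0, L] × [0, T']; that is, the solution of the integral system is unique. -/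

import Mathlib

open MeasureTheory Set Filter intervalIntegral

namespace BoussinesqAux

lemma measurable_sign : Measurable Real.sign := by
  have h : Real.sign = fun r : ℝ => if r < 0 then (-1 : ℝ) else if 0 < r then 1 else 0 := by
    funext r; rfl
  rw [h]
  exact Measurable.ite (measurableSet_lt measurable_id measurable_const) measurable_const
    (Measurable.ite (measurableSet_lt measurable_const measurable_id) measurable_const
      measurable_const)

lemma abs_sign_le (r : ℝ) : |Real.sign r| ≤ 1 := by
  rcases Real.sign_apply_eq r with h | h | h <;> rw [h] <;> norm_num

/-- The explicit off-diagonal formula for the kernel. -/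
noncomputable def Kf (L β μ ξ s : ℝ) : ℝ :=
  (3 / β) * ((Real.sinh ((L - ξ - s) / μ) +
    Real.sign (ξ - s) * Real.sinh ((L - |ξ - s|) / μ)) / Real.sinh (L / μ))

lemma Kf_measurable (L β μ ξ : ℝ) : Measurable (Kf L β μ ξ) := by
  have h1 : Measurable fun s : ℝ => Real.sinh ((L - ξ - s) / μ) := by fun_prop
  have h2 : Measurable fun s : ℝ => Real.sinh ((L - |ξ - s|) / μ) := by fun_prop
  have h3 : Measurable fun s : ℝ => Real.sign (ξ - s) :=
    measurable_sign.comp (by fun_prop)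
  exact measurable_const.mul ((h1.add (h3.mul h2)).div measurable_const)

lemma Kf_bound {L β μ : ℝ} (hL : 0 < L) (hβ : 0 < β) (hμ : 0 < μ)
    {ξ s : ℝ} (hξ : ξ ∈ Icc 0 L) (hs : s ∈ Icc 0 L) : |Kf L β μ ξ s| ≤ 6 / β := by
  obtain ⟨hξ0, hξL⟩ := hξ
  obtain ⟨hs0, hsL⟩ := hs
  have hsinh : 0 < Real.sinh (L / μ) := Real.sinh_pos_iff.2 (div_pos hL hμ)
  have key : ∀ x : ℝ, |x| ≤ L → |Real.sinh (x / μ)| ≤ Real.sinh (L / μ) := by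
    intro x hx
    rw [Real.abs_sinh]
    refine Real.sinh_le_sinh.2 ?_
    rw [abs_div, abs_of_pos hμ]
    gcongr
  have hx1 : |L - ξ - s| ≤ L := abs_le.2 ⟨by linarith, by linarith⟩
  have hx2 : |L - (|ξ - s|)| ≤ L := by
    have h3 : |ξ - s| ≤ L := abs_le.2 ⟨by linarith, by linarith⟩
    have h4 : (0 : ℝ) ≤ |ξ - s| := abs_nonneg _
    exact abs_le.2 ⟨by linarith, by linarith⟩
  have hb1 := key _ hx1
  have hb2 := key _ hx2
  have hnum : |Real.sinh ((L - ξ - s) / μ) + Real.sign (ξ - s) * Real.sinh ((L - |ξ - s|) / μ)|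
      ≤ 2 * Real.sinh (L / μ) := by
    calc |Real.sinh ((L - ξ - s) / μ) + Real.sign (ξ - s) * Real.sinh ((L - |ξ - s|) / μ)|
        ≤ |Real.sinh ((L - ξ - s) / μ)| +
            |Real.sign (ξ - s) * Real.sinh ((L - |ξ - s|) / μ)| := abs_add_le _ _
      _ ≤ Real.sinh (L / μ) + 1 * Real.sinh (L / μ) := by
          rw [abs_mul]
          exact add_le_add hb1 (mul_le_mul (abs_sign_le _) hb2 (abs_nonneg _) zero_le_one)
      _ = 2 * Real.sinh (L / μ) := by ring
  have hfrac : |(Real.sinh ((L - ξ - s) / μ) +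
      Real.sign (ξ - s) * Real.sinh ((L - |ξ - s|) / μ)) / Real.sinh (L / μ)| ≤ 2 := by
    rw [abs_div, abs_of_pos hsinh, div_le_iff₀ hsinh]
    linarith [hnum]
  unfold Kf
  rw [abs_mul, abs_of_pos (by positivity : (0:ℝ) < 3 / β)]
  refine le_trans (mul_le_mul_of_nonneg_left hfrac (by positivity)) (le_of_eq (by ring))

section Inner

variable {L β μ T' : ℝ} {ξ : ℝ} {h : ℝ → ℝ → ℝ}

lemma slice_cont (hh : ContinuousOn (Function.uncurry h) (Icc 0 L ×ˢ Icc 0 T'))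
    {τ : ℝ} (hτ : τ ∈ Icc (0:ℝ) T') : ContinuousOn (fun s => h s τ) (Icc 0 L) :=
  hh.comp (Continuous.continuousOn (by fun_prop)) (fun s hs => Set.mk_mem_prod hs hτ)

lemma slice_cont' (hh : ContinuousOn (Function.uncurry h) (Icc 0 L ×ˢ Icc 0 T'))
    {s : ℝ} (hs : s ∈ Icc (0:ℝ) L) : ContinuousOn (fun τ => h s τ) (Icc 0 T') :=
  hh.comp (Continuous.continuousOn (by fun_prop)) (fun τ hτ => Set.mk_mem_prod hs hτ)

lemma inner_integrable (hL : 0 < L) (hβ : 0 < β) (hμ : 0 < μ)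
    (hξ : ξ ∈ Icc (0:ℝ) L)
    (hh : ContinuousOn (Function.uncurry h) (Icc 0 L ×ˢ Icc 0 T'))
    {τ : ℝ} (hτ : τ ∈ Icc (0:ℝ) T') :
    IntervalIntegrable (fun s => Kf L β μ ξ s * h s τ) volume 0 L := by
  obtain ⟨Mh, hMh⟩ :=
    (isCompact_Icc.prod isCompact_Icc).exists_bound_of_continuousOn hh
  rw [intervalIntegrable_iff_integrableOn_Ioc_of_le hL.le]
  have hmeas : AEStronglyMeasurable (fun s => Kf L β μ ξ s * h s τ)
      (volume.restrict (Ioc 0 L)) := by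
    refine ((Kf_measurable L β μ ξ).aestronglyMeasurable).mul ?_
    exact ((slice_cont hh hτ).mono Ioc_subset_Icc_self).aestronglyMeasurable measurableSet_Ioc
  refine Integrable.mono' (g := fun _ => 6 / β * Mh)
    (integrableOn_const measure_Ioc_lt_top.ne) hmeas ?_
  filter_upwards [ae_restrict_mem measurableSet_Ioc] with s hs
  have hs' : s ∈ Icc (0:ℝ) L := Ioc_subset_Icc_self hs
  have h1 : |Kf L β μ ξ s| ≤ 6 / β := Kf_bound hL hβ hμ hξ hs'
  have h2 : |h s τ| ≤ Mh := by
    have := hMh (s, τ) (Set.mk_mem_prod hs' hτ)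
    simpa [Real.norm_eq_abs] using this
  rw [Real.norm_eq_abs, abs_mul]
  exact mul_le_mul h1 h2 (abs_nonneg _) (by positivity)

lemma inner_continuousOn (hL : 0 < L) (hβ : 0 < β) (hμ : 0 < μ)
    (hξ : ξ ∈ Icc (0:ℝ) L)
    (hh : ContinuousOn (Function.uncurry h) (Icc 0 L ×ˢ Icc 0 T')) :
    ContinuousOn (fun τ => ∫ s in (0:ℝ)..L, Kf L β μ ξ s * h s τ) (Icc 0 T') := by
  obtain ⟨Mh, hMh⟩ :=
    (isCompact_Icc.prod isCompact_Icc).exists_bound_of_continuousOn hh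
  have hrw : (fun τ => ∫ s in (0:ℝ)..L, Kf L β μ ξ s * h s τ)
      = fun τ => ∫ s in Ioc (0:ℝ) L, Kf L β μ ξ s * h s τ := by
    funext τ; exact intervalIntegral.integral_of_le hL.le
  rw [hrw]
  refine continuousOn_of_dominated (bound := fun _ => 6 / β * Mh) ?_ ?_ ?_ ?_
  · intro τ hτ
    refine ((Kf_measurable L β μ ξ).aestronglyMeasurable).mul ?_
    exact ((slice_cont hh hτ).mono Ioc_subset_Icc_self).aestronglyMeasurable measurableSet_Ioc
  · intro τ hτ
    filter_upwards [ae_restrict_mem measurableSet_Ioc] with s hs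
    have hs' : s ∈ Icc (0:ℝ) L := Ioc_subset_Icc_self hs
    have h1 : |Kf L β μ ξ s| ≤ 6 / β := Kf_bound hL hβ hμ hξ hs'
    have h2 : |h s τ| ≤ Mh := by
      have := hMh (s, τ) (Set.mk_mem_prod hs' hτ)
      simpa [Real.norm_eq_abs] using this
    rw [Real.norm_eq_abs, abs_mul]
    exact mul_le_mul h1 h2 (abs_nonneg _) (by positivity)
  · exact integrableOn_const measure_Ioc_lt_top.ne
  · filter_upwards [ae_restrict_mem measurableSet_Ioc] with s hs
    exact continuousOn_const.mul (slice_cont' hh (Ioc_subset_Icc_self hs))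

lemma inner_bound (hL : 0 < L) (hβ : 0 < β) (hμ : 0 < μ)
    (hξ : ξ ∈ Icc (0:ℝ) L)
    {τ b : ℝ} (hτ : τ ∈ Icc (0:ℝ) T') (hb : 0 ≤ b)
    (hbs : ∀ s ∈ Icc (0:ℝ) L, |h s τ| ≤ b) :
    |∫ s in (0:ℝ)..L, Kf L β μ ξ s * h s τ| ≤ 6 / β * b * L := by
  have := intervalIntegral.norm_integral_le_of_norm_le_const
    (C := 6 / β * b) (f := fun s => Kf L β μ ξ s * h s τ) (a := 0) (b := L) ?_
  · rw [Real.norm_eq_abs] at this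
    simpa [abs_of_pos hL] using this
  intro s hs
  rw [Set.uIoc_of_le hL.le] at hs
  have hs' : s ∈ Icc (0:ℝ) L := Ioc_subset_Icc_self hs
  rw [Real.norm_eq_abs, abs_mul]
  exact mul_le_mul (Kf_bound hL hβ hμ hξ hs') (hbs s hs') (abs_nonneg _) (by positivity)

lemma outer_bound (hL : 0 < L) (hβ : 0 < β) (hμ : 0 < μ)
    (hξ : ξ ∈ Icc (0:ℝ) L)
    (hh : ContinuousOn (Function.uncurry h) (Icc 0 L ×ˢ Icc 0 T'))
    (hh' : ContinuousOn (Function.uncurry h') (Icc 0 L ×ˢ Icc 0 T'))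
    {t' : ℝ} (ht' : t' ∈ Icc (0:ℝ) T') {b : ℝ} (hb : 0 ≤ b) {n : ℕ}
    (hp : ∀ s ∈ Icc (0:ℝ) L, ∀ τ ∈ Icc (0:ℝ) T', |h s τ - h' s τ| ≤ b * τ ^ n) :
    |(∫ τ in (0:ℝ)..t', ∫ s in (0:ℝ)..L, Kf L β μ ξ s * h s τ)
      - ∫ τ in (0:ℝ)..t', ∫ s in (0:ℝ)..L, Kf L β μ ξ s * h' s τ|
      ≤ 6 / β * L * b * (t' ^ (n + 1) / (n + 1)) := by
  have ht'0 : 0 ≤ t' := ht'.1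
  have hsub : Set.uIcc (0:ℝ) t' ⊆ Set.Icc (0:ℝ) T' := by
    rw [Set.uIcc_of_le ht'0]; exact Set.Icc_subset_Icc_right ht'.2
  have cF := inner_continuousOn hL hβ hμ hξ hh
  have cF' := inner_continuousOn hL hβ hμ hξ hh'
  have iF : IntervalIntegrable (fun τ => ∫ s in (0:ℝ)..L, Kf L β μ ξ s * h s τ)
      volume 0 t' := (cF.mono hsub).intervalIntegrable
  have iF' : IntervalIntegrable (fun τ => ∫ s in (0:ℝ)..L, Kf L β μ ξ s * h' s τ)
      volume 0 t' := (cF'.mono hsub).intervalIntegrable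
  rw [← intervalIntegral.integral_sub iF iF']
  have key : ∀ τ ∈ Set.Ioc (0:ℝ) t',
      |(∫ s in (0:ℝ)..L, Kf L β μ ξ s * h s τ) - ∫ s in (0:ℝ)..L, Kf L β μ ξ s * h' s τ|
        ≤ 6 / β * (b * τ ^ n) * L := by
    intro τ hτ
    have hτJ : τ ∈ Icc (0:ℝ) T' := ⟨hτ.1.le, hτ.2.trans ht'.2⟩
    rw [← intervalIntegral.integral_sub (inner_integrable hL hβ hμ hξ hh hτJ)
      (inner_integrable hL hβ hμ hξ hh' hτJ)]
    have hfun : (fun s => Kf L β μ ξ s * h s τ - Kf L β μ ξ s * h' s τ)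
        = fun s => Kf L β μ ξ s * (h s τ - h' s τ) := by funext s; ring
    rw [hfun]
    exact inner_bound hL hβ hμ hξ (h := fun s τ => h s τ - h' s τ) hτJ
      (mul_nonneg hb (pow_nonneg hτ.1.le n)) (fun s hs => hp s hs τ hτJ)
  have hgint : IntervalIntegrable (fun τ => 6 / β * (b * τ ^ n) * L) volume 0 t' := by
    apply Continuous.intervalIntegrable; fun_prop
  have hmain := intervalIntegral.norm_integral_le_abs_of_norm_le (μ := volume)
      (f := fun τ => (∫ s in (0:ℝ)..L, Kf L β μ ξ s * h s τ)
        - ∫ s in (0:ℝ)..L, Kf L β μ ξ s * h' s τ)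
      (a := 0) (b := t') (g := fun τ => 6 / β * (b * τ ^ n) * L) ?_ hgint
  · have hval : (∫ τ in (0:ℝ)..t', 6 / β * (b * τ ^ n) * L)
        = 6 / β * L * b * (t' ^ (n + 1) / (n + 1)) := by
      have hfun : (fun τ : ℝ => 6 / β * (b * τ ^ n) * L)
          = fun τ : ℝ => (6 / β * b * L) * τ ^ n := by funext τ; ring
      rw [hfun, intervalIntegral.integral_const_mul, integral_pow, zero_pow (Nat.succ_ne_zero n)]
      ring
    rw [Real.norm_eq_abs, hval] at hmain
    refine hmain.trans (le_of_eq (abs_of_nonneg ?_))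
    exact mul_nonneg (mul_nonneg (mul_nonneg (by positivity) hL.le) hb) (by positivity)
  · filter_upwards [ae_restrict_mem measurableSet_uIoc] with τ hτ
    rw [Set.uIoc_of_le ht'0] at hτ
    rw [Real.norm_eq_abs]
    exact key τ hτ


end Inner

end BoussinesqAux
set_option maxHeartbeats 1000000 in
/-- Uniqueness for the Green's-function integral reformulation of the
variable-coefficient Boussinesq system: two continuous solutions on
`[0,L] × [0,T']` with the same continuous initial data coincide. -/
theorem boussinesq_integral_system_uniqueness
    (L T α β : ℝ) (hL : 0 < L) (hT : 0 < T) (hα : 0 < α) (hβ : 0 < β)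
    (μ : ℝ) (hμ : μ = Real.sqrt (β / 6))
    (K : ℝ → ℝ → ℝ)
    (hK : ∀ ξ s : ℝ, ξ ≠ s → K ξ s =
      (3 / β) * ((Real.sinh ((L - ξ - s) / μ) +
        Real.sign (ξ - s) * Real.sinh ((L - |ξ - s|) / μ)) / Real.sinh (L / μ)))
    (c : ℝ → ℝ) (hc : ContinuousOn c (Set.Icc (0 : ℝ) L))
    (T' : ℝ) (hT'pos : 0 < T') (hT'le : T' ≤ T)
    (N₀ V₀ : ℝ → ℝ)
    (hN₀ : ContinuousOn N₀ (Set.Icc (0 : ℝ) L))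
    (hV₀ : ContinuousOn V₀ (Set.Icc (0 : ℝ) L))
    (N V N' V' : ℝ → ℝ → ℝ)
    (hN : ContinuousOn (Function.uncurry N) (Set.Icc (0 : ℝ) L ×ˢ Set.Icc (0 : ℝ) T'))
    (hV : ContinuousOn (Function.uncurry V) (Set.Icc (0 : ℝ) L ×ˢ Set.Icc (0 : ℝ) T'))
    (hN' : ContinuousOn (Function.uncurry N') (Set.Icc (0 : ℝ) L ×ˢ Set.Icc (0 : ℝ) T'))
    (hV' : ContinuousOn (Function.uncurry V') (Set.Icc (0 : ℝ) L ×ˢ Set.Icc (0 : ℝ) T'))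
    (hsys : ∀ ξ ∈ Set.Icc (0 : ℝ) L, ∀ t ∈ Set.Icc (0 : ℝ) T',
      N ξ t = N₀ ξ + ∫ τ in (0 : ℝ)..t, ∫ s in (0 : ℝ)..L,
          K ξ s * ((1 + α * c s ^ 2 * N s τ) * V s τ) ∧
      V ξ t = V₀ ξ + ∫ τ in (0 : ℝ)..t, ∫ s in (0 : ℝ)..L,
          K ξ s * (c s * N s τ + α / 2 * c s ^ 2 * V s τ ^ 2))
    (hsys' : ∀ ξ ∈ Set.Icc (0 : ℝ) L, ∀ t ∈ Set.Icc (0 : ℝ) T',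
      N' ξ t = N₀ ξ + ∫ τ in (0 : ℝ)..t, ∫ s in (0 : ℝ)..L,
          K ξ s * ((1 + α * c s ^ 2 * N' s τ) * V' s τ) ∧
      V' ξ t = V₀ ξ + ∫ τ in (0 : ℝ)..t, ∫ s in (0 : ℝ)..L,
          K ξ s * (c s * N' s τ + α / 2 * c s ^ 2 * V' s τ ^ 2)) :
    ∀ ξ ∈ Set.Icc (0 : ℝ) L, ∀ t ∈ Set.Icc (0 : ℝ) T',
      N ξ t = N' ξ t ∧ V ξ t = V' ξ t := by
  have hμpos : 0 < μ := by rw [hμ]; positivity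
  -- a.e. identification of K with the explicit formula Kf
  have hne : ∀ ξ'' : ℝ, ∀ᵐ s : ℝ, s ≠ ξ'' := by
    intro ξ''
    rw [MeasureTheory.ae_iff]
    simp only [not_not, Set.setOf_eq_eq_singleton]
    exact MeasureTheory.measure_singleton ξ''
  -- uniform bounds on the data
  obtain ⟨MN, hMN⟩ := (isCompact_Icc.prod isCompact_Icc).exists_bound_of_continuousOn hN
  obtain ⟨MN', hMN'⟩ := (isCompact_Icc.prod isCompact_Icc).exists_bound_of_continuousOn hN'
  obtain ⟨MV, hMV⟩ := (isCompact_Icc.prod isCompact_Icc).exists_bound_of_continuousOn hV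
  obtain ⟨MV', hMV'⟩ := (isCompact_Icc.prod isCompact_Icc).exists_bound_of_continuousOn hV'
  obtain ⟨Mc0, hMc0⟩ := isCompact_Icc.exists_bound_of_continuousOn hc
  set M := max 1 (max Mc0 (max (max MN MN') (max MV MV'))) with hMdef
  have hM1 : (1 : ℝ) ≤ M := le_max_left _ _
  have hMpos : (0 : ℝ) < M := lt_of_lt_of_le zero_lt_one hM1
  have hMc : ∀ s ∈ Set.Icc (0:ℝ) L, |c s| ≤ M := by
    intro s hs
    have h0 := hMc0 s hs
    rw [Real.norm_eq_abs] at h0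
    exact h0.trans ((le_max_left _ _).trans (le_max_right _ _))
  have hNM : ∀ s ∈ Set.Icc (0:ℝ) L, ∀ τ ∈ Set.Icc (0:ℝ) T', |N s τ| ≤ M := by
    intro s hs τ hτ
    have h0 := hMN (s, τ) (Set.mk_mem_prod hs hτ)
    rw [Real.norm_eq_abs] at h0
    exact h0.trans ((le_max_left MN MN').trans
      ((le_max_left (max MN MN') (max MV MV')).trans
        ((le_max_right Mc0 _).trans (le_max_right 1 _))))
  have hN'M : ∀ s ∈ Set.Icc (0:ℝ) L, ∀ τ ∈ Set.Icc (0:ℝ) T', |N' s τ| ≤ M := by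
    intro s hs τ hτ
    have h0 := hMN' (s, τ) (Set.mk_mem_prod hs hτ)
    rw [Real.norm_eq_abs] at h0
    exact h0.trans ((le_max_right MN MN').trans
      ((le_max_left (max MN MN') (max MV MV')).trans
        ((le_max_right Mc0 _).trans (le_max_right 1 _))))
  have hVM : ∀ s ∈ Set.Icc (0:ℝ) L, ∀ τ ∈ Set.Icc (0:ℝ) T', |V s τ| ≤ M := by
    intro s hs τ hτ
    have h0 := hMV (s, τ) (Set.mk_mem_prod hs hτ)
    rw [Real.norm_eq_abs] at h0
    exact h0.trans ((le_max_left MV MV').trans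
      ((le_max_right (max MN MN') (max MV MV')).trans
        ((le_max_right Mc0 _).trans (le_max_right 1 _))))
  have hV'M : ∀ s ∈ Set.Icc (0:ℝ) L, ∀ τ ∈ Set.Icc (0:ℝ) T', |V' s τ| ≤ M := by
    intro s hs τ hτ
    have h0 := hMV' (s, τ) (Set.mk_mem_prod hs hτ)
    rw [Real.norm_eq_abs] at h0
    exact h0.trans ((le_max_right MV MV').trans
      ((le_max_right (max MN MN') (max MV MV')).trans
        ((le_max_right Mc0 _).trans (le_max_right 1 _))))
  -- bound on the difference
  obtain ⟨B, hB⟩ := (isCompact_Icc.prod isCompact_Icc).exists_bound_of_continuousOn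
    (((hN.sub hN').abs).add ((hV.sub hV').abs))
  have hBd : ∀ s ∈ Set.Icc (0:ℝ) L, ∀ τ ∈ Set.Icc (0:ℝ) T',
      |N s τ - N' s τ| + |V s τ - V' s τ| ≤ B := by
    intro s hs τ hτ
    have h0 := hB (s, τ) (Set.mk_mem_prod hs hτ)
    rw [Real.norm_eq_abs] at h0
    exact (le_abs_self _).trans h0
  have hB0 : (0:ℝ) ≤ B :=
    (add_nonneg (abs_nonneg _) (abs_nonneg _)).trans
      (hBd 0 ⟨le_refl 0, hL.le⟩ 0 ⟨le_refl 0, hT'pos.le⟩)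
  -- constants
  set A : ℝ := 1 + M + 2 * α * M ^ 3 with hAdef
  have hApos : 0 < A := by nlinarith [pow_pos hMpos 3, mul_pos hα (pow_pos hMpos 3)]
  set CC : ℝ := 12 / β * L * A with hCdef
  have hCpos : 0 < CC := mul_pos (mul_pos (by positivity) hL) hApos
  -- continuity of composite integrands
  have hcP : ContinuousOn (fun p : ℝ × ℝ => c p.1)
      (Set.Icc (0:ℝ) L ×ˢ Set.Icc (0:ℝ) T') :=
    hc.comp continuous_fst.continuousOn (fun p hp => hp.1)
  have hH1 : ContinuousOn
      (Function.uncurry fun s τ => (1 + α * c s ^ 2 * N s τ) * V s τ)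
      (Set.Icc (0:ℝ) L ×ˢ Set.Icc (0:ℝ) T') :=
    (continuousOn_const.add ((continuousOn_const.mul (hcP.pow 2)).mul hN)).mul hV
  have hH1' : ContinuousOn
      (Function.uncurry fun s τ => (1 + α * c s ^ 2 * N' s τ) * V' s τ)
      (Set.Icc (0:ℝ) L ×ˢ Set.Icc (0:ℝ) T') :=
    (continuousOn_const.add ((continuousOn_const.mul (hcP.pow 2)).mul hN')).mul hV'
  have hH2 : ContinuousOn
      (Function.uncurry fun s τ => c s * N s τ + α / 2 * c s ^ 2 * V s τ ^ 2)
      (Set.Icc (0:ℝ) L ×ˢ Set.Icc (0:ℝ) T') :=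
    (hcP.mul hN).add ((continuousOn_const.mul (hcP.pow 2)).mul (hV.pow 2))
  have hH2' : ContinuousOn
      (Function.uncurry fun s τ => c s * N' s τ + α / 2 * c s ^ 2 * V' s τ ^ 2)
      (Set.Icc (0:ℝ) L ×ˢ Set.Icc (0:ℝ) T') :=
    (hcP.mul hN').add ((continuousOn_const.mul (hcP.pow 2)).mul (hV'.pow 2))
  -- pointwise nonlinear estimates
  have hest1 : ∀ s ∈ Set.Icc (0:ℝ) L, ∀ τ ∈ Set.Icc (0:ℝ) T',
      |(1 + α * c s ^ 2 * N s τ) * V s τ - (1 + α * c s ^ 2 * N' s τ) * V' s τ|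
        ≤ A * (|N s τ - N' s τ| + |V s τ - V' s τ|) := by
    intro s hs τ hτ
    have hc1 := hMc s hs
    have hn1 := hNM s hs τ hτ
    have hv2 := hV'M s hs τ hτ
    have hcsq : c s ^ 2 ≤ M ^ 2 := by
      rw [← sq_abs]
      exact pow_le_pow_left₀ (abs_nonneg _) hc1 2
    have hz1 : |α * c s ^ 2 * N s τ| ≤ α * M ^ 3 := by
      rw [abs_mul, abs_mul, abs_of_pos hα, abs_of_nonneg (sq_nonneg (c s))]
      calc α * c s ^ 2 * |N s τ| = α * (c s ^ 2 * |N s τ|) := by ring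
        _ ≤ α * (M ^ 2 * M) :=
            mul_le_mul_of_nonneg_left
              (mul_le_mul hcsq hn1 (abs_nonneg _) (sq_nonneg M)) hα.le
        _ = α * M ^ 3 := by ring
    have hz2 : |α * c s ^ 2 * V' s τ| ≤ α * M ^ 3 := by
      rw [abs_mul, abs_mul, abs_of_pos hα, abs_of_nonneg (sq_nonneg (c s))]
      calc α * c s ^ 2 * |V' s τ| = α * (c s ^ 2 * |V' s τ|) := by ring
        _ ≤ α * (M ^ 2 * M) :=
            mul_le_mul_of_nonneg_left
              (mul_le_mul hcsq hv2 (abs_nonneg _) (sq_nonneg M)) hα.le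
        _ = α * M ^ 3 := by ring
    have t1 : |1 + α * c s ^ 2 * N s τ| ≤ 1 + α * M ^ 3 := by
      calc |1 + α * c s ^ 2 * N s τ| ≤ |(1:ℝ)| + |α * c s ^ 2 * N s τ| := abs_add_le _ _
        _ ≤ 1 + α * M ^ 3 := by rw [abs_one]; linarith
    have e : (1 + α * c s ^ 2 * N s τ) * V s τ - (1 + α * c s ^ 2 * N' s τ) * V' s τ
        = (1 + α * c s ^ 2 * N s τ) * (V s τ - V' s τ)
          + (α * c s ^ 2 * V' s τ) * (N s τ - N' s τ) := by ring
    rw [e]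
    refine (abs_add_le _ _).trans ?_
    rw [abs_mul, abs_mul]
    have hb1 : |1 + α * c s ^ 2 * N s τ| * |V s τ - V' s τ|
        ≤ (1 + α * M ^ 3) * |V s τ - V' s τ| :=
      mul_le_mul_of_nonneg_right t1 (abs_nonneg _)
    have hb2 : |α * c s ^ 2 * V' s τ| * |N s τ - N' s τ|
        ≤ (α * M ^ 3) * |N s τ - N' s τ| :=
      mul_le_mul_of_nonneg_right hz2 (abs_nonneg _)
    have hA1 : 1 + α * M ^ 3 ≤ A := by
      rw [hAdef]; linarith [mul_pos hα (pow_pos hMpos 3), hMpos]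
    have hA2 : α * M ^ 3 ≤ A := by
      rw [hAdef]; linarith [mul_pos hα (pow_pos hMpos 3), hMpos]
    calc |1 + α * c s ^ 2 * N s τ| * |V s τ - V' s τ|
          + |α * c s ^ 2 * V' s τ| * |N s τ - N' s τ|
        ≤ A * |V s τ - V' s τ| + A * |N s τ - N' s τ| :=
          add_le_add (hb1.trans (mul_le_mul_of_nonneg_right hA1 (abs_nonneg _)))
            (hb2.trans (mul_le_mul_of_nonneg_right hA2 (abs_nonneg _)))
      _ = A * (|N s τ - N' s τ| + |V s τ - V' s τ|) := by ring
  have hest2 : ∀ s ∈ Set.Icc (0:ℝ) L, ∀ τ ∈ Set.Icc (0:ℝ) T',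
      |(c s * N s τ + α / 2 * c s ^ 2 * V s τ ^ 2)
          - (c s * N' s τ + α / 2 * c s ^ 2 * V' s τ ^ 2)|
        ≤ A * (|N s τ - N' s τ| + |V s τ - V' s τ|) := by
    intro s hs τ hτ
    have hc1 := hMc s hs
    have hv1 := hVM s hs τ hτ
    have hv2 := hV'M s hs τ hτ
    have hcsq : c s ^ 2 ≤ M ^ 2 := by
      rw [← sq_abs]
      exact pow_le_pow_left₀ (abs_nonneg _) hc1 2
    have habs : |V s τ + V' s τ| ≤ 2 * M := (abs_add_le _ _).trans (by linarith)
    have hz : |α / 2 * c s ^ 2 * (V s τ + V' s τ)| ≤ α * M ^ 3 := by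
      rw [abs_mul, abs_mul, abs_of_pos (by positivity : (0:ℝ) < α / 2),
        abs_of_nonneg (sq_nonneg (c s))]
      calc α / 2 * c s ^ 2 * |V s τ + V' s τ|
          = α / 2 * (c s ^ 2 * |V s τ + V' s τ|) := by ring
        _ ≤ α / 2 * (M ^ 2 * (2 * M)) :=
            mul_le_mul_of_nonneg_left
              (mul_le_mul hcsq habs (abs_nonneg _) (sq_nonneg M)) (by positivity)
        _ = α * M ^ 3 := by ring
    have e : (c s * N s τ + α / 2 * c s ^ 2 * V s τ ^ 2)
          - (c s * N' s τ + α / 2 * c s ^ 2 * V' s τ ^ 2)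
        = c s * (N s τ - N' s τ)
          + (α / 2 * c s ^ 2 * (V s τ + V' s τ)) * (V s τ - V' s τ) := by ring
    rw [e]
    refine (abs_add_le _ _).trans ?_
    rw [abs_mul, abs_mul]
    have hb1 : |c s| * |N s τ - N' s τ| ≤ M * |N s τ - N' s τ| :=
      mul_le_mul_of_nonneg_right hc1 (abs_nonneg _)
    have hb2 : |α / 2 * c s ^ 2 * (V s τ + V' s τ)| * |V s τ - V' s τ|
        ≤ (α * M ^ 3) * |V s τ - V' s τ| :=
      mul_le_mul_of_nonneg_right hz (abs_nonneg _)
    have hA1 : M ≤ A := by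
      rw [hAdef]; linarith [mul_pos hα (pow_pos hMpos 3)]
    have hA2 : α * M ^ 3 ≤ A := by
      rw [hAdef]; linarith [mul_pos hα (pow_pos hMpos 3), hMpos]
    calc |c s| * |N s τ - N' s τ|
          + |α / 2 * c s ^ 2 * (V s τ + V' s τ)| * |V s τ - V' s τ|
        ≤ A * |N s τ - N' s τ| + A * |V s τ - V' s τ| :=
          add_le_add (hb1.trans (mul_le_mul_of_nonneg_right hA1 (abs_nonneg _)))
            (hb2.trans (mul_le_mul_of_nonneg_right hA2 (abs_nonneg _)))
      _ = A * (|N s τ - N' s τ| + |V s τ - V' s τ|) := by ring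
  -- the iterated (Picard/Gronwall) estimate
  have claim : ∀ n : ℕ, ∀ ξ' ∈ Set.Icc (0:ℝ) L, ∀ t' ∈ Set.Icc (0:ℝ) T',
      |N ξ' t' - N' ξ' t'| + |V ξ' t' - V' ξ' t'|
        ≤ B * (CC * t') ^ n / (n.factorial : ℝ) := by
    intro n
    induction n with
    | zero =>
      intro ξ' hξ' t' ht'
      simpa using hBd ξ' hξ' t' ht'
    | succ n ih =>
      intro ξ' hξ' t' ht'
      obtain ⟨eN1, eV1⟩ := hsys ξ' hξ' t' ht'
      obtain ⟨eN2, eV2⟩ := hsys' ξ' hξ' t' ht'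
      have hKrw : ∀ g : ℝ → ℝ, (∫ s in (0:ℝ)..L, K ξ' s * g s)
          = ∫ s in (0:ℝ)..L, BoussinesqAux.Kf L β μ ξ' s * g s := by
        intro g
        apply intervalIntegral.integral_congr_ae
        filter_upwards [hne ξ'] with s hs _
        rw [hK ξ' s (Ne.symm hs)]
        rfl
      have eqN : N ξ' t' - N' ξ' t'
          = (∫ τ in (0:ℝ)..t', ∫ s in (0:ℝ)..L,
              BoussinesqAux.Kf L β μ ξ' s * ((1 + α * c s ^ 2 * N s τ) * V s τ))
            - ∫ τ in (0:ℝ)..t', ∫ s in (0:ℝ)..L,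
              BoussinesqAux.Kf L β μ ξ' s * ((1 + α * c s ^ 2 * N' s τ) * V' s τ) := by
        have r1 : (∫ τ in (0:ℝ)..t', ∫ s in (0:ℝ)..L,
              K ξ' s * ((1 + α * c s ^ 2 * N s τ) * V s τ))
            = ∫ τ in (0:ℝ)..t', ∫ s in (0:ℝ)..L,
              BoussinesqAux.Kf L β μ ξ' s * ((1 + α * c s ^ 2 * N s τ) * V s τ) :=
          intervalIntegral.integral_congr (fun τ _ => hKrw _)
        have r2 : (∫ τ in (0:ℝ)..t', ∫ s in (0:ℝ)..L,
              K ξ' s * ((1 + α * c s ^ 2 * N' s τ) * V' s τ))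
            = ∫ τ in (0:ℝ)..t', ∫ s in (0:ℝ)..L,
              BoussinesqAux.Kf L β μ ξ' s * ((1 + α * c s ^ 2 * N' s τ) * V' s τ) :=
          intervalIntegral.integral_congr (fun τ _ => hKrw _)
        rw [eN1, eN2, r1, r2]
        ring
      have eqV : V ξ' t' - V' ξ' t'
          = (∫ τ in (0:ℝ)..t', ∫ s in (0:ℝ)..L,
              BoussinesqAux.Kf L β μ ξ' s * (c s * N s τ + α / 2 * c s ^ 2 * V s τ ^ 2))
            - ∫ τ in (0:ℝ)..t', ∫ s in (0:ℝ)..L,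
              BoussinesqAux.Kf L β μ ξ' s * (c s * N' s τ + α / 2 * c s ^ 2 * V' s τ ^ 2) := by
        have r1 : (∫ τ in (0:ℝ)..t', ∫ s in (0:ℝ)..L,
              K ξ' s * (c s * N s τ + α / 2 * c s ^ 2 * V s τ ^ 2))
            = ∫ τ in (0:ℝ)..t', ∫ s in (0:ℝ)..L,
              BoussinesqAux.Kf L β μ ξ' s * (c s * N s τ + α / 2 * c s ^ 2 * V s τ ^ 2) :=
          intervalIntegral.integral_congr (fun τ _ => hKrw _)
        have r2 : (∫ τ in (0:ℝ)..t', ∫ s in (0:ℝ)..L,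
              K ξ' s * (c s * N' s τ + α / 2 * c s ^ 2 * V' s τ ^ 2))
            = ∫ τ in (0:ℝ)..t', ∫ s in (0:ℝ)..L,
              BoussinesqAux.Kf L β μ ξ' s * (c s * N' s τ + α / 2 * c s ^ 2 * V' s τ ^ 2) :=
          intervalIntegral.integral_congr (fun τ _ => hKrw _)
        rw [eV1, eV2, r1, r2]
        ring
      have hb0 : (0:ℝ) ≤ A * (B * CC ^ n / (n.factorial : ℝ)) :=
        mul_nonneg hApos.le (div_nonneg (mul_nonneg hB0 (pow_nonneg hCpos.le n))
          (Nat.cast_nonneg _))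
      have hp1 : ∀ s ∈ Set.Icc (0:ℝ) L, ∀ τ ∈ Set.Icc (0:ℝ) T',
          |(1 + α * c s ^ 2 * N s τ) * V s τ - (1 + α * c s ^ 2 * N' s τ) * V' s τ|
            ≤ (A * (B * CC ^ n / (n.factorial : ℝ))) * τ ^ n := by
        intro s hs τ hτ
        refine (hest1 s hs τ hτ).trans ?_
        calc A * (|N s τ - N' s τ| + |V s τ - V' s τ|)
            ≤ A * (B * (CC * τ) ^ n / (n.factorial : ℝ)) :=
              mul_le_mul_of_nonneg_left (ih s hs τ hτ) hApos.le
          _ = A * (B * CC ^ n / (n.factorial : ℝ)) * τ ^ n := by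
              rw [mul_pow]; ring
      have hp2 : ∀ s ∈ Set.Icc (0:ℝ) L, ∀ τ ∈ Set.Icc (0:ℝ) T',
          |(c s * N s τ + α / 2 * c s ^ 2 * V s τ ^ 2)
              - (c s * N' s τ + α / 2 * c s ^ 2 * V' s τ ^ 2)|
            ≤ (A * (B * CC ^ n / (n.factorial : ℝ))) * τ ^ n := by
        intro s hs τ hτ
        refine (hest2 s hs τ hτ).trans ?_
        calc A * (|N s τ - N' s τ| + |V s τ - V' s τ|)
            ≤ A * (B * (CC * τ) ^ n / (n.factorial : ℝ)) :=
              mul_le_mul_of_nonneg_left (ih s hs τ hτ) hApos.le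
          _ = A * (B * CC ^ n / (n.factorial : ℝ)) * τ ^ n := by
              rw [mul_pow]; ring
      have CN : |N ξ' t' - N' ξ' t'|
          ≤ 6 / β * L * (A * (B * CC ^ n / (n.factorial : ℝ)))
            * (t' ^ (n + 1) / ((n:ℝ) + 1)) := by
        rw [eqN]
        exact BoussinesqAux.outer_bound
          (h := fun s τ => (1 + α * c s ^ 2 * N s τ) * V s τ)
          (h' := fun s τ => (1 + α * c s ^ 2 * N' s τ) * V' s τ)
          hL hβ hμpos hξ' hH1 hH1' ht' hb0 hp1
      have CV : |V ξ' t' - V' ξ' t'|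
          ≤ 6 / β * L * (A * (B * CC ^ n / (n.factorial : ℝ)))
            * (t' ^ (n + 1) / ((n:ℝ) + 1)) := by
        rw [eqV]
        exact BoussinesqAux.outer_bound
          (h := fun s τ => c s * N s τ + α / 2 * c s ^ 2 * V s τ ^ 2)
          (h' := fun s τ => c s * N' s τ + α / 2 * c s ^ 2 * V' s τ ^ 2)
          hL hβ hμpos hξ' hH2 hH2' ht' hb0 hp2
      have heq : 6 / β * L * (A * (B * CC ^ n / (n.factorial : ℝ)))
            * (t' ^ (n + 1) / ((n:ℝ) + 1))
          + 6 / β * L * (A * (B * CC ^ n / (n.factorial : ℝ)))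
            * (t' ^ (n + 1) / ((n:ℝ) + 1))
          = B * (CC * t') ^ (n + 1) / ((n + 1).factorial : ℝ) := by
        have h1 : ((n + 1).factorial : ℝ) = ((n:ℝ) + 1) * (n.factorial : ℝ) := by
          rw [Nat.factorial_succ]; push_cast; ring
        have h2 : (n.factorial : ℝ) ≠ 0 := Nat.cast_ne_zero.2 n.factorial_ne_zero
        have h3 : ((n:ℝ) + 1) ≠ 0 := by positivity
        rw [h1, mul_pow CC t', pow_succ CC n]
        generalize CC ^ n = P
        rw [hCdef]
        field_simp
        ring
      calc |N ξ' t' - N' ξ' t'| + |V ξ' t' - V' ξ' t'|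
          ≤ 6 / β * L * (A * (B * CC ^ n / (n.factorial : ℝ)))
              * (t' ^ (n + 1) / ((n:ℝ) + 1))
            + 6 / β * L * (A * (B * CC ^ n / (n.factorial : ℝ)))
              * (t' ^ (n + 1) / ((n:ℝ) + 1)) := add_le_add CN CV
        _ = B * (CC * t') ^ (n + 1) / ((n + 1).factorial : ℝ) := heq
  -- pass to the limit
  intro ξ hξ t ht
  have hd : ∀ n : ℕ, |N ξ t - N' ξ t| + |V ξ t - V' ξ t|
      ≤ B * (CC * t) ^ n / (n.factorial : ℝ) := fun n => claim n ξ hξ t ht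
  have hlim : Filter.Tendsto (fun n : ℕ => B * (CC * t) ^ n / (n.factorial : ℝ))
      Filter.atTop (nhds 0) := by
    have h1 := FloorSemiring.tendsto_pow_div_factorial_atTop (K := ℝ) (CC * t)
    have h2 := h1.const_mul B
    simpa [mul_div_assoc] using h2
  have hle0 : |N ξ t - N' ξ t| + |V ξ t - V' ξ t| ≤ 0 :=
    ge_of_tendsto hlim (Filter.Eventually.of_forall hd)
  have ha := abs_nonneg (N ξ t - N' ξ t)
  have hb := abs_nonneg (V ξ t - V' ξ t)
  constructor
  · have h1 : |N ξ t - N' ξ t| = 0 := le_antisymm (by linarith) ha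
    exact sub_eq_zero.1 (abs_eq_zero.1 h1)
  · have h1 : |V ξ t - V' ξ t| = 0 := le_antisymm (by linarith) hb
    exact sub_eq_zero.1 (abs_eq_zero.1 h1)
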